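/- arXiv:1707.09005 — 2 statements merged into one kernel-verified Lean document; each statement's English description precedes it below -/
import Mathlib

section
/- Let L and C be categories all of whose morphisms are monomorphisms, and let F : L → C be a faithful, essentially surjective, pullback-full functor. If L has all wide pullbacks, then C has all wide pullbacks. -/
universe u v w

open CategoryTheory CategoryTheory.Limits Cardinal FirstOrder

noncomputable section

namespace Paper

/-! ## General category-theoretic notions -/

/-- A preorder is `κ`-directed if every subset of cardinality `< κ` has an upper bound. -/
def CardDirected (κ : Cardinal.{u}) (J : Type u) [Preorder J] : Prop :=
  ∀ S : Set J, #S < κ → ∃ j : J, ∀ s ∈ S, s ≤ j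

/-- A bundled preordered index type. -/
structure IndexPoset : Type (u + 1) where
  J : Type u
  pre : Preorder J

instance (P : IndexPoset.{u}) : Preorder P.J := P.pre

/-- `C` has all `κ`-directed colimits (indexed by `κ`-directed preorders in `Type u`).
For `κ = ℵ₀` these are the usual directed colimits. -/
def HasCardDirectedColimits (κ : Cardinal.{u}) (C : Type v) [Category.{w} C] : Prop :=
  ∀ (J : Type u) [Preorder J], CardDirected κ J → HasColimitsOfShape J C

/-- An object `M` is `κ`-presentable if its hom-functor `C(M,-)` preserves `κ`-directed
colimits, i.e. every morphism from `M` into a `κ`-directed colimit factors essentially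
uniquely through some stage of the diagram.  For `κ = ℵ₀` this is `ℵ₀`-presentability. -/
def IsCardPresentable {C : Type v} [Category.{w} C] (κ : Cardinal.{u}) (M : C) : Prop :=
  ∀ (J : Type u) [Preorder J], CardDirected κ J →
    ∀ (D : J ⥤ C) (c : Cocone D), IsColimit c →
      (∀ f : M ⟶ c.pt, ∃ (j : J) (g : M ⟶ D.obj j), g ≫ c.ι.app j = f) ∧
      (∀ (j : J) (g₁ g₂ : M ⟶ D.obj j), g₁ ≫ c.ι.app j = g₂ ≫ c.ι.app j →
        ∃ (j' : J) (h : j ≤ j'), g₁ ≫ D.map (homOfLE h) = g₂ ≫ D.map (homOfLE h))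

/-- `C` is `κ`-accessible: it has all `κ`-directed colimits and there is a *set* `S`
of `κ`-presentable objects such that every object of `C` is a `κ`-directed colimit
of objects from `S`. -/
def IsCardAccessible (κ : Cardinal.{u}) (C : Type v) [Category.{w} C] : Prop :=
  HasCardDirectedColimits.{u} κ C ∧
    ∃ S : Set C, Small.{u} S ∧ (∀ M ∈ S, IsCardPresentable.{u} κ M) ∧
      ∀ X : C, ∃ (P : IndexPoset.{u}) (D : P.J ⥤ C) (c : Cocone D),
        CardDirected κ P.J ∧ (∀ j, D.obj j ∈ S) ∧ c.pt = X ∧ Nonempty (IsColimit c)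

/-- `C` has all connected limits (limits over small connected index categories). -/
def HasConnectedLimits (C : Type v) [Category.{w} C] : Prop :=
  ∀ (J : Type u) [SmallCategory J], IsConnected J → HasLimitsOfShape J C

/-- A functor preserves directed colimits. -/
def PreservesDirectedColimits {D : Type*} [Category D] {C : Type*} [Category C]
    (F : D ⥤ C) : Prop :=
  ∀ (J : Type u) [Preorder J], IsDirected J (· ≤ ·) → Nonempty J →
    PreservesColimitsOfShape J F

/-- A functor `F : L ⥤ C` is *pullback-full* if for every set-indexed family of
morphisms `f i : B i ⟶ C₀` in `L` and every family `g i : A ⟶ F.obj (B i)` in `C`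
with `F.map (f i) ∘ g i` all equal, the family `g` lifts along `F`. -/
def PullbackFull {L : Type*} [Category L] {C : Type*} [Category C] (F : L ⥤ C) : Prop :=
  ∀ (I : Type u) (B : I → L) (C₀ : L) (f : ∀ i, B i ⟶ C₀) (A : C)
    (g : ∀ i, A ⟶ F.obj (B i)),
    (∀ i j, g i ≫ F.map (f i) = g j ≫ F.map (f j)) →
    ∃ (A' : L) (hA : F.obj A' = A) (gb : ∀ i, A' ⟶ B i),
      ∀ i, F.map (gb i) = eqToHom hA ≫ g i

/-! ## Classes of structures in a finitary vocabulary

A `SetStruct L W` is a `τ`-structure (for the finitary first-order vocabulary `L`)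
whose universe is a small subset of the ambient class `W` of elements.  The
interpretations of function and relation symbols are given as total functions on
tuples from `W` (their values outside the universe are irrelevant junk), so that the
substructure relation can be taken literally. -/

variable (L : FirstOrder.Language.{u, u}) (W : Type (u + 1))

structure SetStruct : Type (u + 1) where
  carrier : Set W
  small : Small.{u} carrier
  fn : ∀ n : ℕ, L.Functions n → (Fin n → W) → W
  rel : ∀ n : ℕ, L.Relations n → (Fin n → W) → Prop
  fn_mem : ∀ (n : ℕ) (f : L.Functions n) (x : Fin n → W),
    (∀ i, x i ∈ carrier) → fn n f x ∈ carrier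

variable {L W}

theorem SetStruct.ext' {M N : SetStruct L W} (hc : M.carrier = N.carrier)
    (hf : ∀ n f x, M.fn n f x = N.fn n f x)
    (hr : ∀ n r x, M.rel n r x ↔ N.rel n r x) : M = N := by
  rcases M with ⟨c₁, s₁, f₁, r₁, m₁⟩
  rcases N with ⟨c₂, s₂, f₂, r₂, m₂⟩
  dsimp only at hc hf hr
  subst hc
  have hf' : f₁ = f₂ := by funext n f x; exact hf n f x
  have hr' : r₁ = r₂ := by funext n r x; exact propext (hr n r x)
  subst hf'; subst hr'
  rfl

/-- `M` is a substructure of `N`:  the universe of `M` is contained in that of `N` and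
the interpretations of all function and relation symbols agree on tuples from `M`
(in particular relations are both preserved and reflected). -/
def Sub (M N : SetStruct L W) : Prop :=
  M.carrier ⊆ N.carrier ∧
    (∀ (n : ℕ) (f : L.Functions n) (x : Fin n → W),
      (∀ i, x i ∈ M.carrier) → M.fn n f x = N.fn n f x) ∧
    (∀ (n : ℕ) (r : L.Relations n) (x : Fin n → W),
      (∀ i, x i ∈ M.carrier) → (M.rel n r x ↔ N.rel n r x))

theorem Sub.refl (M : SetStruct L W) : Sub M M :=
  ⟨le_refl _, fun _ _ _ _ => rfl, fun _ _ _ _ => Iff.rfl⟩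

theorem Sub.trans {M N P : SetStruct L W} (h₁ : Sub M N) (h₂ : Sub N P) : Sub M P :=
  ⟨h₁.1.trans h₂.1,
   fun n f x hx => (h₁.2.1 n f x hx).trans (h₂.2.1 n f x fun i => h₁.1 (hx i)),
   fun n r x hx => (h₁.2.2 n r x hx).trans (h₂.2.2 n r x fun i => h₁.1 (hx i))⟩

/-- A (substructure) embedding of `τ`-structures: an injective map preserving all
function symbols and preserving and reflecting all relation symbols. -/
structure Emb (M N : SetStruct L W) : Type (u + 1) where
  toFun : M.carrier → N.carrier
  inj : Function.Injective toFun
  map_fn : ∀ (n : ℕ) (f : L.Functions n) (x : Fin n → M.carrier),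
    (toFun ⟨M.fn n f fun i => (x i : W), M.fn_mem n f _ fun i => (x i).2⟩ : W) =
      N.fn n f fun i => (toFun (x i) : W)
  map_rel : ∀ (n : ℕ) (r : L.Relations n) (x : Fin n → M.carrier),
    M.rel n r (fun i => (x i : W)) ↔ N.rel n r fun i => (toFun (x i) : W)

theorem Emb.ext' {M N : SetStruct L W} {e₁ e₂ : Emb M N}
    (h : e₁.toFun = e₂.toFun) : e₁ = e₂ := by
  rcases e₁ with ⟨f₁, i₁, mf₁, mr₁⟩
  rcases e₂ with ⟨f₂, i₂, mf₂, mr₂⟩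
  dsimp only at h
  subst h
  rfl

/-- The identity embedding. -/
def Emb.refl (M : SetStruct L W) : Emb M M where
  toFun := id
  inj := fun _ _ h => h
  map_fn _ _ _ := rfl
  map_rel _ _ _ := Iff.rfl

/-- Composition of embeddings. -/
def Emb.comp {M N P : SetStruct L W} (g : Emb N P) (f : Emb M N) : Emb M P where
  toFun := g.toFun ∘ f.toFun
  inj := g.inj.comp f.inj
  map_fn n φ x := by
    have h1 : f.toFun ⟨M.fn n φ fun i => (x i : W), M.fn_mem n φ _ fun i => (x i).2⟩ =
        ⟨N.fn n φ fun i => (f.toFun (x i) : W), N.fn_mem n φ _ fun i => (f.toFun (x i)).2⟩ :=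
      Subtype.ext (f.map_fn n φ x)
    show (g.toFun (f.toFun _) : W) = _
    rw [h1]
    exact g.map_fn n φ fun i => f.toFun (x i)
  map_rel n r x :=
    (f.map_rel n r x).trans (g.map_rel n r fun i => f.toFun (x i))

/-- The inclusion embedding of a substructure. -/
def Sub.emb {M N : SetStruct L W} (h : Sub M N) : Emb M N where
  toFun x := ⟨(x : W), h.1 x.2⟩
  inj := by
    intro a b hab
    have hv : (a : W) = (b : W) := by
      have hv0 := congrArg Subtype.val hab
      exact hv0
    exact Subtype.ext hv
  map_fn n f x := h.2.1 n f _ fun i => (x i).2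
  map_rel n r x := h.2.2 n r _ fun i => (x i).2

/-- The image structure `f[M] ⊆ N` of an embedding `f : M → N`. -/
def Emb.imageStruct {M N : SetStruct L W} (e : Emb M N) : SetStruct L W where
  carrier := Set.range fun x : M.carrier => (e.toFun x : W)
  small := by
    haveI := M.small
    exact small_range _
  fn := N.fn
  rel := N.rel
  fn_mem := by
    intro n f x hx
    choose y hy using hx
    have hy' : ∀ i, (e.toFun (y i) : W) = x i := hy
    refine ⟨⟨M.fn n f fun i => (y i : W), M.fn_mem n f _ fun i => (y i).2⟩, ?_⟩
    show (e.toFun ⟨M.fn n f fun i => (y i : W), M.fn_mem n f _ fun i => (y i).2⟩ : W) =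
      N.fn n f x
    rw [e.map_fn n f y]
    exact congrArg (N.fn n f) (funext hy')

theorem Emb.imageStruct_sub {M N : SetStruct L W} (e : Emb M N) : Sub e.imageStruct N := by
  refine ⟨?_, fun _ _ _ _ => rfl, fun _ _ _ _ => Iff.rfl⟩
  rintro _ ⟨x, rfl⟩
  exact (e.toFun x).2

/-- Corestriction of an embedding onto its image. -/
def Emb.corestrict {M N : SetStruct L W} (e : Emb M N) : Emb M e.imageStruct where
  toFun x := ⟨(e.toFun x : W), ⟨x, rfl⟩⟩
  inj := by
    intro a b h
    have hv : (e.toFun a : W) = (e.toFun b : W) := by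
      have hv0 := congrArg Subtype.val h
      exact hv0
    exact e.inj (Subtype.ext hv)
  map_fn n f x := e.map_fn n f x
  map_rel n r x := e.map_rel n r x

theorem Emb.corestrict_surjective {M N : SetStruct L W} (e : Emb M N) :
    Function.Surjective e.corestrict.toFun := by
  rintro ⟨y, x, rfl⟩
  exact ⟨x, rfl⟩

theorem imageStruct_refl (M : SetStruct L W) : (Emb.refl M).imageStruct = M := by
  refine SetStruct.ext' ?_ (fun _ _ _ => rfl) (fun _ _ _ => Iff.rfl)
  exact Subtype.range_coe

/-! ## Universal classes -/

variable (L W)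

/-- A *universal class*: a class of `τ`-structures closed under isomorphism,
substructures, and unions of directed systems of substructure inclusions. -/
structure UniversalClass : Type (u + 2) where
  K : Set (SetStruct L W)
  iso_closed : ∀ {M N : SetStruct L W} (e : Emb M N),
    Function.Surjective e.toFun → M ∈ K → N ∈ K
  sub_closed : ∀ {M N : SetStruct L W}, Sub M N → N ∈ K → M ∈ K
  union_closed : ∀ (P : IndexPoset.{u}), IsDirected P.J (· ≤ ·) → Nonempty P.J →
    ∀ D : P.J → SetStruct L W, (∀ j, D j ∈ K) →
      (∀ ⦃j j' : P.J⦄, j ≤ j' → Sub (D j) (D j')) →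
      ∀ MU : SetStruct L W, MU.carrier = ⋃ j, (D j).carrier →
        (∀ j, Sub (D j) MU) → MU ∈ K

variable {L W}

/-- The category associated to a universal class: objects are its members,
morphisms are all substructure embeddings. -/
def UnivCat (U : UniversalClass L W) : Type (u + 1) :=
  {M : SetStruct L W // M ∈ U.K}

instance (U : UniversalClass L W) : Category (UnivCat U) where
  Hom M N := Emb M.1 N.1
  id M := Emb.refl M.1
  comp f g := g.comp f
  id_comp _ := Emb.ext' rfl
  comp_id _ := Emb.ext' rfl
  assoc _ _ _ := Emb.ext' rfl

/-! ## Abstract elementary classes -/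

variable (L W)

/-- The Löwenheim–Skolem–Tarski property for the (set-sized) cardinal `κ`. -/
def LSTWitness (K : Set (SetStruct L W))
    (le : SetStruct L W → SetStruct L W → Prop) (κ : Cardinal.{u + 1}) : Prop :=
  κ < Cardinal.univ.{u, u + 1} ∧ Cardinal.lift.{u + 1} L.card ≤ κ ∧ ℵ₀ ≤ κ ∧
    ∀ M ∈ K, ∀ s : Set W, s ⊆ M.carrier →
      ∃ M₀ : SetStruct L W, le M₀ M ∧ s ⊆ M₀.carrier ∧ #M₀.carrier ≤ #s + κ

/-- An abstract elementary class (AEC) in the finitary vocabulary `L`: an abstract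
class (a class of structures closed under isomorphism together with a strong
substructure order `le` refining the substructure relation and respecting
isomorphisms) satisfying coherence, the chain (Tarski–Vaught) axioms, and the
Löwenheim–Skolem–Tarski axiom. -/
structure AEC : Type (u + 2) where
  K : Set (SetStruct L W)
  le : SetStruct L W → SetStruct L W → Prop
  le_mem : ∀ {M N : SetStruct L W}, le M N → M ∈ K ∧ N ∈ K
  le_refl : ∀ M ∈ K, le M M
  le_trans : ∀ {M N P : SetStruct L W}, le M N → le N P → le M P
  le_antisymm : ∀ {M N : SetStruct L W}, le M N → le N M → M = N
  le_sub : ∀ {M N : SetStruct L W}, le M N → Sub M N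
  iso_closed : ∀ {M N : SetStruct L W} (e : Emb M N),
    Function.Surjective e.toFun → M ∈ K → N ∈ K
  le_iso : ∀ {M N N' : SetStruct L W} (e : Emb N N'),
    Function.Surjective e.toFun → ∀ h : le M N,
      le (Emb.imageStruct (Emb.comp e (Sub.emb (le_sub h)))) N'
  coherence : ∀ {M₀ M₁ M₂ : SetStruct L W},
    Sub M₀ M₁ → le M₁ M₂ → le M₀ M₂ → le M₀ M₁
  chain : ∀ (P : IndexPoset.{u}), IsDirected P.J (· ≤ ·) → Nonempty P.J →
    ∀ D : P.J → SetStruct L W, (∀ ⦃j j' : P.J⦄, j ≤ j' → le (D j) (D j')) →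
      ∃ MU : SetStruct L W, MU ∈ K ∧ MU.carrier = ⋃ j, (D j).carrier ∧
        (∀ j, le (D j) MU) ∧ ∀ N : SetStruct L W, (∀ j, le (D j) N) → le MU N
  lst : ∃ κ : Cardinal.{u + 1}, LSTWitness L W K le κ

variable {L W}

/-- The Löwenheim–Skolem–Tarski number of an AEC. -/
def AEC.LS (A : AEC L W) : Cardinal.{u + 1} :=
  sInf {κ | LSTWitness L W A.K A.le κ}

theorem AEC.le_image_comp (A : AEC L W) {M N P : SetStruct L W}
    {f : Emb M N} {g : Emb N P}
    (hf : A.le f.imageStruct N) (hg : A.le g.imageStruct P) :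
    A.le (g.comp f).imageStruct P := by
  have h := A.le_iso g.corestrict g.corestrict_surjective hf
  have key : (Emb.comp g.corestrict (Sub.emb (A.le_sub hf))).imageStruct =
      (g.comp f).imageStruct := by
    refine SetStruct.ext' ?_ (fun _ _ _ => rfl) (fun _ _ _ => Iff.rfl)
    ext w
    constructor
    · rintro ⟨x, hx⟩
      obtain ⟨z, hz⟩ := x.2
      refine ⟨z, ?_⟩
      rw [← hx]
      exact congrArg (fun t : N.carrier => (g.toFun t : W)) (Subtype.ext hz)
    · rintro ⟨z, hz⟩
      refine ⟨⟨(f.toFun z : W), ⟨z, rfl⟩⟩, ?_⟩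
      rw [← hz]
      exact congrArg (fun t : N.carrier => (g.toFun t : W)) (Subtype.ext rfl)
  rw [key] at h
  exact A.le_trans h hg

/-- The category associated to an AEC: objects are its members, morphisms are the
`K`-embeddings, i.e. those embeddings `f : M → N` whose image `f[M]` is a strong
(`≤`) substructure of `N`. -/
def AEC.Cat (A : AEC L W) : Type (u + 1) :=
  {M : SetStruct L W // M ∈ A.K}

instance (A : AEC L W) : Category A.Cat where
  Hom M N := {e : Emb M.1 N.1 // A.le e.imageStruct N.1}
  id M := ⟨Emb.refl M.1, by rw [imageStruct_refl]; exact A.le_refl M.1 M.2⟩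
  comp f g := ⟨g.1.comp f.1, A.le_image_comp f.2 g.2⟩
  id_comp _ := Subtype.ext (Emb.ext' rfl)
  comp_id _ := Subtype.ext (Emb.ext' rfl)
  assoc _ _ _ := Subtype.ext (Emb.ext' rfl)

/-- The closure `cl^N(s)`: the intersection of the universes of all strong
substructures of `N` containing `s`. -/
def AEC.clSet (A : AEC L W) (N : SetStruct L W) (s : Set W) : Set W :=
  ⋂ M ∈ {M : SetStruct L W | A.le M N ∧ s ⊆ M.carrier}, M.carrier

/-- `K` admits intersections: for every `N ∈ K` and `s ⊆ UN`, the set `cl^N(s)` is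
the universe of a strong substructure of `N`. -/
def AEC.AdmitsIntersections (A : AEC L W) : Prop :=
  ∀ N ∈ A.K, ∀ s : Set W, s ⊆ N.carrier →
    ∃ M₀ : SetStruct L W, A.le M₀ N ∧ M₀.carrier = A.clSet N s

theorem AEC.clSet_subset (A : AEC L W) {N : SetStruct L W} (hN : N ∈ A.K)
    {s : Set W} (hs : s ⊆ N.carrier) : A.clSet N s ⊆ N.carrier :=
  Set.biInter_subset_of_mem (⟨A.le_refl N hN, hs⟩ : _ ∈ {M : SetStruct L W | A.le M N ∧ s ⊆ M.carrier})

/-- The canonical structure with universe `cl^N(s)` (the restriction of `N`). -/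
def AEC.clStruct (A : AEC L W) (N : SetStruct L W) (s : Set W)
    (hN : N ∈ A.K) (hs : s ⊆ N.carrier) : SetStruct L W where
  carrier := A.clSet N s
  small := by
    haveI := N.small
    exact small_subset (A.clSet_subset hN hs)
  fn := N.fn
  rel := N.rel
  fn_mem := by
    intro n f x hx
    refine Set.mem_iInter₂.2 fun M hM => ?_
    have hxM : ∀ i, x i ∈ M.carrier := fun i => Set.mem_iInter₂.1 (hx i) M hM
    have hfn := (A.le_sub hM.1).2.1 n f x hxM
    exact hfn ▸ M.fn_mem n f x hxM

/-- `K` is pseudo-universal: it admits intersections and any two `K`-embeddings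
agreeing on a set `s` agree on `cl(s)`. -/
def AEC.PseudoUniversal (A : AEC L W) : Prop :=
  A.AdmitsIntersections ∧
    ∀ M N : SetStruct L W, M ∈ A.K → N ∈ A.K →
      ∀ f g : Emb M N, A.le f.imageStruct N → A.le g.imageStruct N →
        ∀ s : Set W, s ⊆ M.carrier →
          (∀ x : M.carrier, (x : W) ∈ s → f.toFun x = g.toFun x) →
          ∀ x : M.carrier, (x : W) ∈ A.clSet M s → f.toFun x = g.toFun x

/-- The reduct of a structure along a vocabulary morphism `φ : L →ᴸ L'`. -/
def SetStruct.reduct {L L' : FirstOrder.Language.{u, u}} (φ : L →ᴸ L')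
    {W : Type (u + 1)} (M : SetStruct L' W) : SetStruct L W where
  carrier := M.carrier
  small := M.small
  fn n f x := M.fn n (φ.onFunction f) x
  rel n r x := M.rel n (φ.onRelation r) x
  fn_mem n f x hx := M.fn_mem n (φ.onFunction f) x hx

/-- The subset of `N` generated by `s`: the least subset of the universe of `N`
containing `s` and closed under all functions of `N`. -/
def genSet (N : SetStruct L W) (s : Set W) : Set W :=
  ⋂ t ∈ {t : Set W | s ⊆ t ∧ t ⊆ N.carrier ∧
    ∀ (n : ℕ) (f : L.Functions n) (x : Fin n → W), (∀ i, x i ∈ t) → N.fn n f x ∈ t}, t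


/-- The underlying embedding of a morphism in the category of a universal class. -/
def univHomEmb {U : UniversalClass L W} {M N : UnivCat U} (e : M ⟶ N) : Emb M.1 N.1 := e

/-- The underlying embedding of a morphism in the category of an AEC. -/
def aecHomEmb {A : AEC L W} {M N : A.Cat} (e : M ⟶ N) : Emb M.1 N.1 :=
  (e : {f : Emb M.1 N.1 // A.le f.imageStruct N.1}).1

universe v' w'

/-! Up to isomorphism, a wide cospan in `C` is the image of one in `Lc`, whose wide pullback
`F` carries to a limit: pullback-fullness lifts any cone over the image to a family in `Lc`,
which is a cone by faithfulness and therefore factors through the limit there, and the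
factorization is unique because the base leg of the image cone is a monomorphism. -/

namespace WidePullbackShape

def toBase {J : Type*} : ∀ i : WidePullbackShape J, i ⟶ none
  | none => 𝟙 _
  | some j => WidePullbackShape.Hom.term j

end WidePullbackShape

namespace PullbackFull

variable {E : Type*} [Category E] {C : Type*} [Category C] {F : E ⥤ C}

theorem exists_lift (hpf : PullbackFull.{u} F) {A : C} {Y : E} (g : A ⟶ F.obj Y) :
    ∃ (X : E) (e : F.obj X ≅ A) (g' : X ⟶ Y), F.map g' = e.hom ≫ g := by
  obtain ⟨X, hX, g', hg'⟩ :=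
    hpf PUnit (fun _ => Y) Y (fun _ => 𝟙 Y) A (fun _ => g) fun _ _ => rfl
  exact ⟨X, eqToIso hX, g' ⟨⟩, hg' ⟨⟩⟩

theorem exists_comp_iso [F.EssSurj] (hpf : PullbackFull.{u} F) {J : Type*}
    (D : WidePullbackShape J ⥤ C) : ∃ K : WidePullbackShape J ⥤ E, Nonempty (K ⋙ F ≅ D) := by
  let ψ := F.objObjPreimageIso (D.obj none)
  choose X e f hf using fun j =>
    hpf.exists_lift (D.map (WidePullbackShape.Hom.term j) ≫ ψ.inv)
  exact ⟨WidePullbackShape.wideCospan (F.objPreimage (D.obj none)) X f,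
    ⟨WidePullbackShape.functorExt ψ e fun j =>
      (Iso.eq_comp_inv ψ).1 ((hf j).trans (Category.assoc _ _ _).symm)⟩⟩

theorem exists_lift_mapCone [F.Faithful] (hpf : PullbackFull.{u} F) {J : Type u}
    {K : WidePullbackShape J ⥤ E} {c : Cone K} (hc : IsLimit c) (s : Cone (K ⋙ F)) :
    ∃ l : s.pt ⟶ F.obj c.pt, ∀ i, l ≫ F.map (c.π.app i) = s.π.app i := by
  obtain ⟨X, hX, g, hg⟩ := hpf (WidePullbackShape J) K.obj (K.obj none)
    (fun i => K.map (WidePullbackShape.toBase i)) s.pt s.π.app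
    fun i i' => (s.w _).trans (s.w _).symm
  let t : Cone K :=
    { pt := X
      π := { app := g
             naturality := fun i i' f => F.map_injective <| by
               simp [hg, ← s.w f] } }
  refine ⟨eqToHom hX.symm ≫ F.map (hc.lift t), fun i => ?_⟩
  rw [Category.assoc, ← F.map_comp, hc.fac]
  simp [t, hg]

def isLimitMapCone [F.Faithful] (hpf : PullbackFull.{u} F)
    (hmono : ∀ ⦃X Y : C⦄ (f : X ⟶ Y), Mono f) {J : Type u}
    {K : WidePullbackShape J ⥤ E} {c : Cone K} (hc : IsLimit c) : IsLimit (F.mapCone c) :=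
  IsLimit.ofExistsUnique fun s => by
    obtain ⟨l, hl⟩ := hpf.exists_lift_mapCone hc s
    refine ⟨l, hl, fun m hm => ?_⟩
    have := hmono (F.map (c.π.app none))
    exact (cancel_mono _).1 ((hm none).trans (hl none).symm)

end PullbackFull

theorem statement_16_general {Lc : Type v} [Category.{w} Lc] {C : Type v'} [Category.{w'} C]
    (F : Lc ⥤ C)
    (hCmono : ∀ ⦃X Y : C⦄ (f : X ⟶ Y), Mono f)
    (hfaith : F.Faithful) (hes : F.EssSurj) (hpf : PullbackFull.{u} F)
    (hwp : HasWidePullbacks.{u} Lc) : HasWidePullbacks.{u} C := by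
  refine fun J => ⟨fun D => ?_⟩
  obtain ⟨K, ⟨e⟩⟩ := hpf.exists_comp_iso D
  have : HasLimit (K ⋙ F) := ⟨⟨⟨_, hpf.isLimitMapCone hCmono (limit.isLimit K)⟩⟩⟩
  exact hasLimit_of_iso e

/-- If `F : L ⥤ C` is a faithful, essentially surjective,
pullback-full functor between categories all of whose morphisms are monomorphisms,
and `L` has all wide pullbacks, then so does `C`. -/
theorem statement_16 {Lc : Type v} [Category.{w} Lc] {C : Type v'} [Category.{w'} C]
    (F : Lc ⥤ C)
    (hLmono : ∀ ⦃X Y : Lc⦄ (f : X ⟶ Y), Mono f)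
    (hCmono : ∀ ⦃X Y : C⦄ (f : X ⟶ Y), Mono f)
    (hfaith : F.Faithful) (hes : F.EssSurj) (hpf : PullbackFull.{u} F)
    (hwp : HasWidePullbacks.{u} Lc) : HasWidePullbacks.{u} C :=
  statement_16_general F hCmono hfaith hes hpf hwp

end Paper
end
end

section
/- Let λ be an infinite regular cardinal, and let C be the category whose objects are the sets of cardinality at least λ and whose morphisms are injective functions. Then C contains no λ-presentable object; consequently C is not λ-accessible. -/
universe u v w

open CategoryTheory CategoryTheory.Limits Cardinal FirstOrder

noncomputable section

namespace Paper

/-! ## Classes of structures in a finitary vocabulary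

A `SetStruct L W` is a `τ`-structure (for the finitary first-order vocabulary `L`)
whose universe is a small subset of the ambient class `W` of elements.  The
interpretations of function and relation symbols are given as total functions on
tuples from `W` (their values outside the universe are irrelevant junk), so that the
substructure relation can be taken literally. -/

variable (L : FirstOrder.Language.{u, u}) (W : Type (u + 1))

variable {L W}

/-! ## Universal classes -/

variable (L W)

variable {L W}

/-! ## Abstract elementary classes -/

variable (L W)

variable {L W}

/-- The category whose objects are the sets (types) of cardinality at least `lam`
and whose morphisms are the injective functions. -/
structure BigSet (lam : Cardinal.{u}) : Type (u + 1) where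
  carrier : Type u
  big : lam ≤ #carrier

instance (lam : Cardinal.{u}) : Category (BigSet lam) where
  Hom A B := A.carrier ↪ B.carrier
  id M := Function.Embedding.refl M.carrier
  comp f g := f.trans g
  id_comp _ := Function.Embedding.ext fun _ => rfl
  comp_id _ := Function.Embedding.ext fun _ => rfl
  assoc _ _ _ := Function.Embedding.ext fun _ => rfl

/-! Fix `X` with `lam ≤ #X`. The diagram `A ↦ A ⊕ X` of injections, over the `lam`-directed
poset of subsets `A ⊆ X` with `#A < lam`, has colimit `X ⊕ X`: points of the left copy of `X`
are glued along the inclusions `A ⊆ B`, and every point already occurs in a finite stage.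
The left inclusion `X → X ⊕ X` cannot factor through a stage `A ⊕ X`, since it would force
`A = X`; so `X` is not `lam`-presentable. An accessible category has a presentable object,
because a `lam`-directed diagram is nonempty. -/

theorem IsCardAccessible.exists_isCardPresentable {κ : Cardinal.{u}} {C : Type v}
    [Category.{w} C] (h : IsCardAccessible.{u} κ C) (hκ : 0 < κ) (X : C) :
    ∃ M : C, IsCardPresentable.{u} κ M := by
  obtain ⟨-, S, -, hpres, hcol⟩ := h
  obtain ⟨P, D, -, hdir, hS, -⟩ := hcol X
  obtain ⟨j, -⟩ := hdir ∅ (by simpa using hκ)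
  exact ⟨D.obj j, hpres _ (hS j)⟩

namespace BigSet

variable {lam : Cardinal.{u}}

instance {A B : BigSet lam} : FunLike (A ⟶ B) A.carrier B.carrier :=
  inferInstanceAs (FunLike (A.carrier ↪ B.carrier) _ _)

instance {A B : BigSet lam} : EmbeddingLike (A ⟶ B) A.carrier B.carrier :=
  inferInstanceAs (EmbeddingLike (A.carrier ↪ B.carrier) _ _)

@[ext]
theorem hom_ext {A B : BigSet lam} {f g : A ⟶ B} (h : ∀ x, f x = g x) : f = g :=
  DFunLike.ext f g h

abbrev SmallSubset (lam : Cardinal.{u}) (X : Type u) : Type u :=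
  {A : Set X // #A < lam}

def SmallSubset.ofFinite (hlam : ℵ₀ ≤ lam) {X : Type u} {T : Set X} (hT : T.Finite) :
    SmallSubset lam X :=
  ⟨T, hT.lt_aleph0.trans_le hlam⟩

theorem cardDirected_smallSubset (hreg : lam.IsRegular) (X : Type u) :
    CardDirected lam (SmallSubset lam X) := by
  intro S hS
  refine ⟨⟨⋃ A : S, (A : SmallSubset lam X).1, ?_⟩, fun A hA => ?_⟩
  · exact mk_iUnion_le_sum_mk.trans_lt
      (sum_lt_of_isRegular hreg hS fun A => (A : SmallSubset lam X).2)
  · exact Set.subset_iUnion (fun A : S => (A : SmallSubset lam X).1) ⟨A, hA⟩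

theorem mk_le_sum_carrier (A : Type u) (X : BigSet lam) : lam ≤ #(A ⊕ X.carrier) :=
  X.big.trans (mk_le_of_injective Sum.inr_injective)

def padDiagram (X : BigSet lam) : SmallSubset lam X.carrier ⥤ BigSet lam where
  obj A := ⟨A.1 ⊕ X.carrier, mk_le_sum_carrier _ X⟩
  map f := ⟨Sum.map (Set.inclusion (leOfHom f)) id,
    (Set.inclusion_injective (leOfHom f)).sumMap Function.injective_id⟩
  map_id A := by ext (_ | _) <;> rfl
  map_comp f g := by ext (_ | _) <;> rfl

def padCocone (X : BigSet lam) : Cocone (padDiagram X) where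
  pt := ⟨X.carrier ⊕ X.carrier, mk_le_sum_carrier _ X⟩
  ι.app A := ⟨Sum.map Subtype.val id, Subtype.val_injective.sumMap Function.injective_id⟩
  ι.naturality A B f := by ext (_ | _) <;> rfl

theorem exists_stage_lift (hlam : ℵ₀ ≤ lam) {X : BigSet lam} {T : Set (X.carrier ⊕ X.carrier)}
    (hT : T.Finite) :
    ∃ A : SmallSubset lam X.carrier, ∀ z ∈ T, ∃ w, (padCocone X).ι.app A w = z := by
  refine ⟨.ofFinite hlam (hT.preimage Sum.inl_injective.injOn), ?_⟩
  rintro (a | x) hz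
  exacts [⟨Sum.inl ⟨a, hz⟩, rfl⟩, ⟨Sum.inr x, rfl⟩]

def padDesc (hlam : ℵ₀ ≤ lam) {X : BigSet lam} (s : Cocone (padDiagram X)) :
    X.carrier ⊕ X.carrier → s.pt.carrier
  | .inl a => s.ι.app (.ofFinite hlam (Set.finite_singleton a)) (.inl ⟨a, rfl⟩)
  | .inr x => s.ι.app (.ofFinite hlam Set.finite_empty) (.inr x)

theorem ι_app_apply_eq_padDesc (hlam : ℵ₀ ≤ lam) {X : BigSet lam} (s : Cocone (padDiagram X))
    (A : SmallSubset lam X.carrier) (w : A.1 ⊕ X.carrier) :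
    s.ι.app A w = padDesc hlam s ((padCocone X).ι.app A w) := by
  rcases w with ⟨a, ha⟩ | x
  · have h : SmallSubset.ofFinite hlam (Set.finite_singleton a) ≤ A :=
      Set.singleton_subset_iff.2 ha
    exact DFunLike.congr_fun (s.w (homOfLE h)) (.inl ⟨a, rfl⟩)
  · have h : SmallSubset.ofFinite hlam Set.finite_empty ≤ A := Set.empty_subset A.1
    exact DFunLike.congr_fun (s.w (homOfLE h)) (.inr x)

theorem padDesc_injective (hlam : ℵ₀ ≤ lam) {X : BigSet lam} (s : Cocone (padDiagram X)) :
    Function.Injective (padDesc hlam s) := by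
  intro z z' h
  obtain ⟨A, hA⟩ := exists_stage_lift hlam (Set.toFinite {z, z'})
  obtain ⟨w, rfl⟩ := hA z (.inl rfl)
  obtain ⟨w', rfl⟩ := hA z' (.inr rfl)
  have hs : s.ι.app A w = s.ι.app A w' :=
    (ι_app_apply_eq_padDesc hlam s A w).trans (h.trans (ι_app_apply_eq_padDesc hlam s A w').symm)
  rw [EmbeddingLike.injective _ hs]

def padCoconeIsColimit (hlam : ℵ₀ ≤ lam) (X : BigSet lam) : IsColimit (padCocone X) where
  desc s := ⟨padDesc hlam s, padDesc_injective hlam s⟩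
  fac s A := by
    ext w
    exact (ι_app_apply_eq_padDesc hlam s A w).symm
  uniq s m hm := by
    ext z
    obtain ⟨A, hA⟩ := exists_stage_lift hlam (Set.finite_singleton z)
    obtain ⟨w, rfl⟩ := hA z rfl
    exact (DFunLike.congr_fun (hm A) w).trans (ι_app_apply_eq_padDesc hlam s A w)

theorem comp_padCocone_ι_ne_inl (X : BigSet lam) (A : SmallSubset lam X.carrier)
    (g : X ⟶ (padDiagram X).obj A) : g ≫ (padCocone X).ι.app A ≠ Function.Embedding.inl := by
  intro h
  have hA : A.1 = Set.univ := by
    refine Set.eq_univ_of_forall fun a => ?_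
    have ha : Sum.map Subtype.val id (g a) = Sum.inl a := DFunLike.congr_fun h a
    rcases hga : g a with b | x <;> rw [hga] at ha
    · exact Sum.inl_injective ha ▸ b.2
    · exact absurd ha Sum.inr_ne_inl
  have hsmall := A.2
  rw [hA, mk_univ] at hsmall
  exact (hsmall.trans_le X.big).false

theorem not_isCardPresentable (hreg : lam.IsRegular) (M : BigSet lam) :
    ¬ IsCardPresentable.{u} lam M := by
  intro hM
  obtain ⟨hfactor, -⟩ := hM _ (cardDirected_smallSubset hreg M.carrier) (padDiagram M)
    (padCocone M) (padCoconeIsColimit hreg.aleph0_le M)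
  obtain ⟨A, g, hg⟩ := hfactor Function.Embedding.inl
  exact comp_padCocone_ι_ne_inl M A g hg

end BigSet

/-- For an infinite regular cardinal `λ`, the category of sets of
cardinality at least `λ` (with injections) has no `λ`-presentable object, and is
therefore not `λ`-accessible. -/
theorem statement_18 (lam : Cardinal.{u}) (hreg : lam.IsRegular) :
    (∀ M : BigSet lam, ¬ IsCardPresentable.{u} lam M) ∧
    ¬ IsCardAccessible.{u} lam (BigSet lam) := by
  refine ⟨BigSet.not_isCardPresentable hreg, fun hacc => ?_⟩
  obtain ⟨M, hM⟩ := hacc.exists_isCardPresentable hreg.pos ⟨lam.out, (mk_out lam).ge⟩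
  exact BigSet.not_isCardPresentable hreg M hM

end Paper
end
end
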